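/- There is an absolute constant C > 0 such that for all positive integers n, k, every finite alphabet Σ with |Σ| ≥ 2, and every real 0 < γ ≤ 1, there exists a γ-PRG Gen : {0,1}^s → ({0,1}^n)^k for (k,n,Σ) block decision trees with seed length s ≤ n + k·log₂|Σ| + 2·log₂(1/γ) + C. -/

import Mathlib

open Classical

/-- Probability of `P` under the uniform distribution on a finite type. -/
noncomputable def pr {α : Type*} [Fintype α] (P : α → Prop) : ℝ :=
  ((Finset.univ.filter P).card : ℝ) / (Fintype.card α : ℝ)

/-- `f : {0,1}^n → ℝ^d` is `(ε,δ)`-concentrated at `μ`. -/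
def Concentrated (n d : ℕ) (ε δ : ℝ)
    (f : (Fin n → Bool) → Fin d → ℝ) (μ : Fin d → ℝ) : Prop :=
  pr (fun X : Fin n → Bool => ∃ j, |f X j - μ j| > ε) ≤ δ

/-- A deterministic owner for `k` rounds of `(ε,δ)`-concentrated functions
`{0,1}^n → ℝ^d`: given the history of responses `Y_1,…,Y_{i-1}`, it produces
a function `f_i` together with a point `μ_i` at which `f_i` is concentrated. -/
structure Owner (n k d : ℕ) (ε δ : ℝ) where
  act : List (Fin d → ℝ) → (((Fin n → Bool) → Fin d → ℝ) × (Fin d → ℝ))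
  conc : ∀ ys : List (Fin d → ℝ), ys.length < k →
    Concentrated n d ε δ (act ys).1 (act ys).2

/-- A one-query steward with randomness complexity `m`: in each round it chooses
a query point from its randomness and the past query answers, and it chooses a
response from its randomness and the past and current query answers. -/
structure Steward (n k d m : ℕ) where
  q : (Fin m → Bool) → List (Fin d → ℝ) → (Fin n → Bool)
  r : (Fin m → Bool) → List (Fin d → ℝ) → (Fin d → ℝ) → (Fin d → ℝ)

/-- The interaction `O ↔ S(Z)` for `i` rounds: the list of triples `(Y_i, W_i, μ_i)`. -/
noncomputable def run {n k d m : ℕ} {ε δ : ℝ} (O : Owner n k d ε δ) (S : Steward n k d m)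
    (Z : Fin m → Bool) : ℕ → List ((Fin d → ℝ) × (Fin d → ℝ) × (Fin d → ℝ))
  | 0 => []
  | i + 1 =>
    let h := run O S Z i
    let fμ := O.act (h.map fun p => p.1)
    let X := S.q Z (h.map fun p => p.2.1)
    let W := fμ.1 X
    h ++ [(S.r Z (h.map fun p => p.2.1) W, W, fμ.2)]

/-- `S` is a one-query `(ε',δ')`-steward for `k` adaptively chosen
`(ε,δ)`-concentrated functions `{0,1}^n → ℝ^d`. -/
def IsSteward (n k d m : ℕ) (ε δ ε' δ' : ℝ) (S : Steward n k d m) : Prop :=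
  ∀ O : Owner n k d ε δ,
    pr (fun Z : Fin m → Bool =>
      ∃ p ∈ run O S Z k, ∃ j : Fin d, |p.1 j - p.2.2 j| > ε') ≤ δ'

/-- The output string of a `(k,n,Σ)` block decision tree, given as the family of
node functions `v_w` indexed by strings `w`, on input the list `Xs` of blocks:
`σ_i = v_{(σ_1,…,σ_{i-1})}(X_i)`. -/
def treeOutList {A I : Type*} (v : List A → I → A) (Xs : List I) : List A :=
  Xs.foldl (fun w X => w ++ [v w X]) []

/-- `Gen` is a `γ`-PRG for `(k,n,A)` block decision trees: for every tree, the total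
variation distance between the output distribution on pseudorandom inputs and on
truly random inputs is at most `γ`. -/
def IsBDTPRG (n k s : ℕ) (A : Type*) [Fintype A] (γ : ℝ)
    (Gen : (Fin s → Bool) → Fin k → (Fin n → Bool)) : Prop :=
  ∀ v : List A → (Fin n → Bool) → A,
    (1 / 2) * ∑ σ : Fin k → A,
      |pr (fun x : Fin s → Bool => treeOutList v (List.ofFn (Gen x)) = List.ofFn σ)
        - pr (fun X : Fin k → (Fin n → Bool) => treeOutList v (List.ofFn X) = List.ofFn σ)|
      ≤ γ

/-!
A uniformly random `Gen : {0,1}^s → ({0,1}^n)^k` estimates the probability of any fixed event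
to within `γ`, except with probability `2 exp (-2 γ² 2^s)` (Hoeffding). The output distribution of
a block decision tree depends only on its node functions at strings of length `< k`, and its total
variation distance is the largest discrepancy over sets of outputs. So it suffices to fool the
events "the output lies in `W`" for at most `exp (2^(n+1) |Σ|^k)` pairs (tree, `W`), and a union
bound succeeds once `2^s ≥ 2^(n+1) |Σ|^k / γ²`, i.e. for `s = n + k log₂|Σ| + 2 log₂(1/γ) + O(1)`.
-/

open Real Finset MeasureTheory ProbabilityTheory

section Pr

variable {α : Type*} [Fintype α]

lemma pr_eq_measureReal [MeasurableSpace α] [MeasurableSingletonClass α] (P : α → Prop) :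
    pr P = (uniformOn Set.univ : Measure α).real {x | P x} := by
  have hP : {x | P x} = ((univ.filter P : Finset α) : Set α) := by ext; simp
  rw [measureReal_def, uniformOn_univ, ENNReal.toReal_div, hP, Measure.count_apply_finset]
  simp [pr]

lemma pr_exists_le_sum {ι : Type*} [Fintype ι] (P : ι → α → Prop) :
    pr (fun x => ∃ i, P i x) ≤ ∑ i, pr (P i) := by
  let _ : MeasurableSpace α := ⊤
  simp only [pr_eq_measureReal, Set.ofPred_exists]
  exact measureReal_iUnion_fintype_le _

lemma pr_or_le (P Q : α → Prop) : pr (fun x => P x ∨ Q x) ≤ pr P + pr Q := by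
  let _ : MeasurableSpace α := ⊤
  simp only [pr_eq_measureReal, Set.ofPred_or]
  exact measureReal_union_le _ _

lemma pr_not [Nonempty α] (P : α → Prop) : pr (fun x => ¬ P x) = 1 - pr P := by
  let _ : MeasurableSpace α := ⊤
  have := isProbabilityMeasure_uniformOn (Set.finite_univ (α := α)) Set.univ_nonempty
  rw [pr_eq_measureReal, pr_eq_measureReal, ← probReal_compl_eq_one_sub .of_discrete]
  rfl

lemma exists_not_of_pr_lt_one [Nonempty α] {P : α → Prop} (h : pr P < 1) : ∃ x, ¬ P x := by
  by_contra! hP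
  have : pr (fun x => ¬ P x) = 0 := by simp [pr, hP]
  linarith [pr_not P]

lemma pr_mem_eq_sum {β : Type*} (f : α → β) (W : Finset β) :
    pr (fun x => f x ∈ W) = ∑ b ∈ W, pr (fun x => f x = b) := by
  let _ : MeasurableSpace α := ⊤
  simp only [pr_eq_measureReal]
  rw [← measureReal_biUnion_finset]
  · congr 1; ext x; simp
  · intro b _ c _ hbc
    exact Set.disjoint_left.2 fun x hb hc => hbc (hb.symm.trans hc)
  · exact fun _ _ => .of_discrete

lemma pr_mono {P Q : α → Prop} (h : ∀ x, P x → Q x) : pr P ≤ pr Q := by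
  let _ : MeasurableSpace α := ⊤
  simp only [pr_eq_measureReal]
  exact measureReal_mono h

lemma sum_boole_eq_card_mul_pr (P : α → Prop) :
    ∑ x, (if P x then (1 : ℝ) else 0) = Fintype.card α * pr P := by
  rcases isEmpty_or_nonempty α with hα | hα
  · simp
  · rw [Finset.sum_boole, pr]
    field_simp

lemma pr_mem_image_eq_sum {β κ : Type*} [DecidableEq β] (f : α → β) {e : κ → β}
    (he : Function.Injective e) (W : Finset κ) :
    pr (fun x => f x ∈ W.image e) = ∑ c ∈ W, pr (fun x => f x = e c) := by
  rw [pr_mem_eq_sum, sum_image fun _ _ _ _ h => he h]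

end Pr

lemma pr_add_le_pr_comp_mem_le_exp {D U : Type*} [Fintype D] [Nonempty D] [Fintype U] [Nonempty U]
    (E : Set U) {ε : ℝ} (hε : 0 ≤ ε) :
    pr (fun g : D → U => pr (· ∈ E) + ε ≤ pr (fun x => g x ∈ E)) ≤
      exp (-2 * ε ^ 2 * Fintype.card D) := by
  let _ : MeasurableSpace U := ⊤
  let ν : Measure U := uniformOn Set.univ
  have : IsProbabilityMeasure ν := isProbabilityMeasure_uniformOn Set.finite_univ Set.univ_nonempty
  -- the uniform measure on `D → U` is a product measure, so the values `g x` are independent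
  let μ : Measure (D → U) := Measure.pi fun _ => ν
  have hμ : (uniformOn Set.univ : Measure (D → U)) = μ := by
    rw [← Set.pi_univ, uniformOn_pi]
  have hmean : ν[E.indicator 1] = pr (· ∈ E) := by
    rw [integral_indicator_one .of_discrete, pr_eq_measureReal]; rfl
  let X : U → ℝ := fun u => E.indicator 1 u - pr (· ∈ E)
  have hX : ∀ x : D,
      HasSubgaussianMGF (fun g => X (g x)) ((‖(1 : ℝ) - 0‖₊ / 2) ^ 2) μ := by
    intro x
    have hx := measurePreserving_eval (fun _ => ν) x
    show HasSubgaussianMGF (X ∘ Function.eval x) _ μ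
    refine .of_map (Y := Function.eval x) hx.measurable.aemeasurable ?_
    rw [hx.map_eq]
    simp only [X, ← hmean]
    refine hasSubgaussianMGF_of_mem_Icc (Measurable.of_discrete).aemeasurable
      (ae_of_all _ fun u => ?_)
    by_cases hu : u ∈ E <;> simp [hu]
  have hind : iIndepFun (fun x (g : D → U) => X (g x)) μ :=
    iIndepFun_pi (X := fun _ => X) fun _ => (Measurable.of_discrete).aemeasurable
  have hH := HasSubgaussianMGF.measure_sum_ge_le_of_iIndepFun hind (s := univ) (fun x _ => hX x)
    (ε := ε * Fintype.card D) (by positivity)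
  have hN : (0 : ℝ) < Fintype.card D := by exact_mod_cast Fintype.card_pos
  have hset : {g : D → U | pr (· ∈ E) + ε ≤ pr (fun x => g x ∈ E)} =
      {g | ε * Fintype.card D ≤ ∑ x, X (g x)} := by
    ext g
    simp only [Set.mem_ofPred_eq, X, Finset.sum_sub_distrib, Finset.sum_const, card_univ,
      nsmul_eq_mul, Set.indicator_apply, Pi.one_apply, sum_boole_eq_card_mul_pr]
    rw [← mul_sub, mul_comm, mul_le_mul_iff_of_pos_left hN, le_sub_iff_add_le']
  rw [pr_eq_measureReal, hμ, hset]
  refine hH.trans (le_of_eq ?_)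
  congr 1
  norm_num
  field_simp
  ring

lemma pr_lt_abs_pr_comp_mem_sub_le {D U : Type*} [Fintype D] [Nonempty D] [Fintype U] [Nonempty U]
    (E : Set U) {ε : ℝ} (hε : 0 ≤ ε) :
    pr (fun g : D → U => ε < |pr (fun x => g x ∈ E) - pr (· ∈ E)|) ≤
      2 * exp (-2 * ε ^ 2 * Fintype.card D) := by
  have hupper := pr_add_le_pr_comp_mem_le_exp (D := D) E hε
  have hlower := pr_add_le_pr_comp_mem_le_exp (D := D) Eᶜ hε
  simp only [Set.mem_compl_iff, pr_not] at hlower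
  calc _ ≤ pr (fun g : D → U => (pr (· ∈ E) + ε ≤ pr (fun x => g x ∈ E)) ∨
          (1 - pr (· ∈ E) + ε ≤ 1 - pr (fun x => g x ∈ E))) := by
        refine pr_mono fun g hg => ?_
        rcases lt_abs.1 hg with h | h
        · exact .inl (by linarith)
        · exact .inr (by linarith)
    _ ≤ _ := (pr_or_le _ _).trans (by linarith)

theorem exists_forall_abs_pr_comp_mem_sub_le {D U ι : Type*} [Fintype D] [Nonempty D] [Fintype U]
    [Nonempty U] [Fintype ι] (E : ι → Set U) {ε : ℝ} (hε : 0 ≤ ε)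
    (hι : 2 * Fintype.card ι < exp (2 * ε ^ 2 * Fintype.card D)) :
    ∃ g : D → U, ∀ i, |pr (fun x => g x ∈ E i) - pr (· ∈ E i)| ≤ ε := by
  have hbad :
      pr (fun g : D → U => ∃ i, ε < |pr (fun x => g x ∈ E i) - pr (· ∈ E i)|) < 1 :=
    calc _ ≤ ∑ i, 2 * exp (-2 * ε ^ 2 * Fintype.card D) :=
          (pr_exists_le_sum _).trans (sum_le_sum fun i _ => pr_lt_abs_pr_comp_mem_sub_le (E i) hε)
      _ = 2 * Fintype.card ι / exp (2 * ε ^ 2 * Fintype.card D) := by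
          rw [sum_const, card_univ, nsmul_eq_mul, div_eq_mul_inv, ← exp_neg]; ring_nf
      _ < 1 := (div_lt_one (exp_pos _)).2 hι
  simpa using exists_not_of_pr_lt_one hbad

lemma sum_abs_sub_le_two_mul {ι : Type*} [Fintype ι] {p q : ι → ℝ} {γ : ℝ}
    (h : ∀ W : Finset ι, |∑ i ∈ W, (p i - q i)| ≤ γ) : ∑ i, |p i - q i| ≤ 2 * γ := by
  rw [← sum_filter_add_sum_filter_not univ (fun i => 0 ≤ p i - q i),
    sum_congr rfl fun i hi => abs_of_nonneg (mem_filter.1 hi).2,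
    sum_congr rfl fun i hi => abs_of_neg (not_le.1 (mem_filter.1 hi).2), sum_neg_distrib]
  linarith [le_abs_self (∑ i ∈ univ.filter (fun i => 0 ≤ p i - q i), (p i - q i)),
    neg_abs_le (∑ i ∈ univ.filter (fun i => ¬ 0 ≤ p i - q i), (p i - q i)),
    h (univ.filter fun i => 0 ≤ p i - q i), h (univ.filter fun i => ¬ 0 ≤ p i - q i)]

/-- `Σ i : Fin k, Fin i → A` are the strings of length `< k`, the only nodes a tree visits on
`k` input blocks. -/
abbrev TreeCode (k : ℕ) (I A : Type*) : Type _ := (Σ i : Fin k, Fin i → A) → I → A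

namespace TreeCode

variable {k : ℕ} {I A : Type*}

def ofTree (v : List A → I → A) : TreeCode k I A := fun w X => v (List.ofFn w.2) X

def toTree [Inhabited A] (c : TreeCode k I A) (w : List A) : I → A :=
  if h : w.length < k then c ⟨⟨w.length, h⟩, w.get⟩ else fun _ => default

lemma toTree_ofTree [Inhabited A] (v : List A → I → A) {w : List A} (hw : w.length < k) :
    (ofTree v : TreeCode k I A).toTree w = v w := by
  funext X
  simp [toTree, hw, ofTree]

def event [Inhabited A] (c : TreeCode k I A) (W : Finset (Fin k → A)) : Set (Fin k → I) :=
  {X | treeOutList c.toTree (List.ofFn X) ∈ W.image List.ofFn}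

variable [Fintype I] [DecidableEq I] [Fintype A]

lemma card_eq :
    Fintype.card (TreeCode k I A) =
      Fintype.card A ^ (Fintype.card I * ∑ i ∈ range k, Fintype.card A ^ i) := by
  rw [Fintype.card_fun, Fintype.card_fun, Fintype.card_sigma, ← pow_mul,
    ← Fin.sum_univ_eq_sum_range]
  simp

lemma card_le_exp :
    (Fintype.card (TreeCode k I A) : ℝ) ≤
      exp (Fintype.card I * ((Fintype.card A : ℝ) ^ k - 1)) := by
  have hA := add_one_le_exp ((Fintype.card A : ℝ) - 1)
  calc (Fintype.card (TreeCode k I A) : ℝ)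
      = (Fintype.card A : ℝ) ^ (Fintype.card I * ∑ i ∈ range k, Fintype.card A ^ i) := by
        rw [card_eq]; push_cast; rfl
    _ ≤ exp (Fintype.card A - 1) ^ (Fintype.card I * ∑ i ∈ range k, Fintype.card A ^ i) :=
        pow_le_pow_left₀ (by positivity) (by linarith) _
    _ = exp (Fintype.card I *
          ((∑ i ∈ range k, (Fintype.card A : ℝ) ^ i) * (Fintype.card A - 1))) := by
        rw [← exp_nat_mul]; push_cast; ring_nf
    _ = exp (Fintype.card I * ((Fintype.card A : ℝ) ^ k - 1)) := by rw [geom_sum_mul]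

lemma two_mul_card_prod_finset_le [Nonempty I] :
    2 * (Fintype.card (TreeCode k I A × Finset (Fin k → A)) : ℝ) ≤
      exp (2 * Fintype.card I * Fintype.card A ^ k) := by
  have hI : (1 : ℝ) ≤ Fintype.card I := by exact_mod_cast Fintype.card_pos
  have hA : (0 : ℝ) ≤ (Fintype.card A : ℝ) ^ k := by positivity
  have htwo : (2 : ℝ) ^ (Fintype.card A ^ k + 1) ≤ exp ((Fintype.card A : ℝ) ^ k + 1) :=
    calc (2 : ℝ) ^ (Fintype.card A ^ k + 1) ≤ exp 1 ^ (Fintype.card A ^ k + 1) :=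
          pow_le_pow_left₀ zero_le_two (by linarith [add_one_le_exp 1]) _
      _ = exp ((Fintype.card A : ℝ) ^ k + 1) := by rw [← exp_nat_mul]; push_cast; ring_nf
  calc 2 * (Fintype.card (TreeCode k I A × Finset (Fin k → A)) : ℝ)
      = Fintype.card (TreeCode k I A) * 2 ^ (Fintype.card A ^ k + 1) := by
        rw [Fintype.card_prod, Fintype.card_finset, Fintype.card_fun (α := Fin k), Fintype.card_fin]
        push_cast; ring
    _ ≤ exp (Fintype.card I * ((Fintype.card A : ℝ) ^ k - 1)) *
          exp ((Fintype.card A : ℝ) ^ k + 1) :=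
        mul_le_mul card_le_exp htwo (by positivity) (exp_pos _).le
    _ ≤ exp (2 * Fintype.card I * Fintype.card A ^ k) := by
        rw [← exp_add]; exact exp_le_exp.2 (by nlinarith)

end TreeCode

lemma foldl_append_singleton_congr {A I : Type*} {k : ℕ} {v v' : List A → I → A}
    (hvv' : ∀ w, w.length < k → v w = v' w) (Xs : List I) (w : List A)
    (hlen : w.length + Xs.length ≤ k) :
    Xs.foldl (fun w X => w ++ [v w X]) w = Xs.foldl (fun w X => w ++ [v' w X]) w := by
  induction Xs generalizing w with
  | nil => rfl
  | cons X Xs ih =>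
    simp only [List.length_cons] at hlen
    simp only [List.foldl_cons]
    rw [hvv' w (by omega)]
    exact ih _ (by simp; omega)

lemma treeOutList_congr {A I : Type*} {k : ℕ} {v v' : List A → I → A}
    (hvv' : ∀ w, w.length < k → v w = v' w) {Xs : List I} (hXs : Xs.length ≤ k) :
    treeOutList v Xs = treeOutList v' Xs :=
  foldl_append_singleton_congr hvv' Xs [] (by simpa)

lemma treeOutList_toTree_ofTree {k : ℕ} {I A : Type*} [Inhabited A] (v : List A → I → A)
    (X : Fin k → I) :
    treeOutList (TreeCode.ofTree v : TreeCode k I A).toTree (List.ofFn X) =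
      treeOutList v (List.ofFn X) :=
  treeOutList_congr (fun _ hw => TreeCode.toTree_ofTree v hw) (by simp)

lemma isBDTPRG_of_forall_abs_pr_sub_le {n k s : ℕ} {A : Type*} [Fintype A] [Inhabited A]
    {γ : ℝ} (Gen : (Fin s → Bool) → Fin k → (Fin n → Bool))
    (h : ∀ (c : TreeCode k (Fin n → Bool) A) (W : Finset (Fin k → A)),
      |pr (fun x => Gen x ∈ c.event W) - pr (· ∈ c.event W)| ≤ γ) :
    IsBDTPRG n k s A γ Gen := by
  intro v
  have hW : ∀ W : Finset (Fin k → A),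
      |∑ σ ∈ W, (pr (fun x => treeOutList v (List.ofFn (Gen x)) = List.ofFn σ) -
        pr (fun X : Fin k → (Fin n → Bool) => treeOutList v (List.ofFn X) = List.ofFn σ))|
        ≤ γ := by
    intro W
    have := h (TreeCode.ofTree v) W
    simp only [TreeCode.event, Set.mem_ofPred_eq, treeOutList_toTree_ofTree] at this
    rwa [pr_mem_image_eq_sum (fun x => treeOutList v (List.ofFn (Gen x))) List.ofFn_injective,
      pr_mem_image_eq_sum (fun X => treeOutList v (List.ofFn X)) List.ofFn_injective,
      ← sum_sub_distrib] at this
  linarith [sum_abs_sub_le_two_mul hW]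

lemma exists_seed_length (n k : ℕ) {a γ : ℝ} (ha : 1 ≤ a) (hγ0 : 0 < γ) (hγ1 : γ ≤ 1) :
    ∃ s : ℕ, 2 ^ n * a ^ k < γ ^ 2 * 2 ^ s ∧
      (s : ℝ) ≤ n + k * logb 2 a + 2 * logb 2 (1 / γ) + 2 := by
  set y : ℝ := 2 ^ (n + 1) * a ^ k * (1 / γ) ^ 2 with hy
  have hy1 : 1 ≤ y :=
    one_le_mul_of_one_le_of_one_le (one_le_mul_of_one_le_of_one_le (one_le_pow₀ one_le_two)
      (one_le_pow₀ ha)) (one_le_pow₀ (one_le_one_div hγ0 hγ1))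
  have hlogy : logb 2 y = n + 1 + k * logb 2 a + 2 * logb 2 (1 / γ) := by
    rw [hy, logb_mul (by positivity) (by positivity), logb_mul (by positivity) (by positivity),
      logb_pow, logb_pow, logb_pow, logb_self_eq_one one_lt_two]
    push_cast; ring
  refine ⟨⌈logb 2 y⌉₊, ?_, ?_⟩
  · have hys : y ≤ 2 ^ ⌈logb 2 y⌉₊ := by
      rw [← rpow_natCast, ← logb_le_iff_le_rpow one_lt_two (by positivity)]
      exact Nat.le_ceil _
    have hγy : γ ^ 2 * y = 2 * (2 ^ n * a ^ k) := by
      rw [hy]; field_simp; ring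
    nlinarith [mul_le_mul_of_nonneg_left hys (sq_nonneg γ),
      (by positivity : (0 : ℝ) < 2 ^ n * a ^ k)]
  · linarith [Nat.ceil_lt_add_one (logb_nonneg one_lt_two hy1)]

/-- nonconstructive PRG for block decision trees: there is an absolute
constant `C > 0` such that for all positive `n, k`, every finite alphabet with at least
two symbols, and every `0 < γ ≤ 1`, there is a `γ`-PRG for `(k,n,Σ)` block decision
trees with seed length `s ≤ n + k·log₂|Σ| + 2·log₂(1/γ) + C`. -/
theorem bdt_prg_nonconstructive :
    ∃ C : ℝ, 0 < C ∧
      ∀ n k : ℕ, 0 < n → 0 < k →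
        ∀ (A : Type) [Fintype A], 2 ≤ Fintype.card A →
          ∀ γ : ℝ, 0 < γ → γ ≤ 1 →
            ∃ (s : ℕ) (Gen : (Fin s → Bool) → Fin k → (Fin n → Bool)),
              IsBDTPRG n k s A γ Gen ∧
              (s : ℝ) ≤ n + k * Real.logb 2 (Fintype.card A : ℝ) +
                2 * Real.logb 2 (1 / γ) + C := by
  refine ⟨2, two_pos, fun n k _ _ A _ hA γ hγ0 hγ1 => ?_⟩
  have : Inhabited A := Classical.inhabited_of_nonempty (Fintype.card_pos_iff.1 (by omega))
  obtain ⟨s, hs_large, hs_le⟩ := exists_seed_length n k (a := Fintype.card A)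
    (by exact_mod_cast (by omega : 1 ≤ Fintype.card A)) hγ0 hγ1
  have hcount : 2 * (Fintype.card (TreeCode k (Fin n → Bool) A × Finset (Fin k → A)) : ℝ) <
      exp (2 * γ ^ 2 * Fintype.card (Fin s → Bool)) := by
    refine TreeCode.two_mul_card_prod_finset_le.trans_lt (exp_lt_exp.2 ?_)
    simp only [Fintype.card_fun, Fintype.card_bool, Fintype.card_fin, Nat.cast_pow,
      Nat.cast_ofNat]
    linarith
  obtain ⟨Gen, hGen⟩ := exists_forall_abs_pr_comp_mem_sub_le
    (fun cW : TreeCode k (Fin n → Bool) A × Finset (Fin k → A) => cW.1.event cW.2)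
    hγ0.le hcount
  exact ⟨s, Gen, isBDTPRG_of_forall_abs_pr_sub_le Gen fun c W => hGen (c, W), hs_le⟩
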